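/- If S is a finite set with |S| = s ≥ 1 and 𝒜 is a family of subsets of S with |𝒜| ≤ s, then there exists an element a ∈ S such that for every A ∈ 𝒜, if A ∪ {a} ∈ 𝒜 then a ∈ A. -/
import Mathlib


variable {α : Type*} [DecidableEq α]

/-- `𝒜` is a Bondy system on `S`: some `a ∈ S` satisfies `a ∈ A` whenever
`A ∈ 𝒜` and `A ∪ {a} ∈ 𝒜`. -/
def IsBondy (S : Finset α) (𝒜 : Finset (Finset α)) : Prop :=
  ∃ a ∈ S, ∀ A ∈ 𝒜, insert a A ∈ 𝒜 → a ∈ A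

lemma bondy_aux {α : Type*} [DecidableEq α] (n : ℕ) :
    ∀ (S : Finset α) (𝒜 : Finset (Finset α)), S.card = n → 1 ≤ S.card →
    (∀ A ∈ 𝒜, A ⊆ S) → 𝒜.card ≤ S.card →
    ∃ a ∈ S, ∀ A ∈ 𝒜, insert a A ∈ 𝒜 → a ∈ A := by
  induction n using Nat.strong_induction_on with
  | _ n ih =>
    intro S 𝒜 hn hs hsub hcard
    obtain ⟨x, hx⟩ := Finset.card_pos.mp hs
    by_cases h1 : 𝒜.card ≤ 1
    · refine ⟨x, hx, fun A hA hiA => ?_⟩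
      by_contra hxA
      have heq : insert x A = A := Finset.card_le_one.mp h1 _ hiA _ hA
      exact hxA (heq ▸ Finset.mem_insert_self x A)
    · push_neg at h1
      set 𝒜' := 𝒜.image (fun A : Finset α => A.erase x) with h𝒜'
      by_cases hinj : 𝒜'.card = 𝒜.card
      · refine ⟨x, hx, fun A hA hiA => ?_⟩
        by_contra hxA
        have hInj : Set.InjOn (fun A : Finset α => A.erase x) ↑𝒜 := Finset.card_image_iff.mp hinj
        have : insert x A = A := by
          apply hInj hiA hA
          simp [Finset.erase_insert hxA, Finset.erase_eq_of_notMem hxA]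
        exact hxA (this ▸ Finset.mem_insert_self x A)
      · have himg : 𝒜'.card < 𝒜.card :=
          lt_of_le_of_ne (Finset.card_image_le) hinj
        have hn2 : 2 ≤ n := by omega
        obtain ⟨a, ha, hgood⟩ := ih (n - 1) (by omega) (S.erase x) 𝒜'
          (by rw [Finset.card_erase_of_mem hx, hn])
          (by rw [Finset.card_erase_of_mem hx]; omega)
          (by
            intro B hB
            obtain ⟨A, hA, rfl⟩ := Finset.mem_image.mp hB
            exact Finset.erase_subset_erase x (hsub A hA))
          (by rw [Finset.card_erase_of_mem hx]; omega)
        have hax : a ≠ x := Finset.ne_of_mem_erase ha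
        refine ⟨a, Finset.mem_of_mem_erase ha, fun A hA hiA => ?_⟩
        by_contra haA
        have h1' : A.erase x ∈ 𝒜' := Finset.mem_image_of_mem _ hA
        have h2' : insert a (A.erase x) ∈ 𝒜' := by
          rw [← Finset.erase_insert_of_ne hax]
          exact Finset.mem_image_of_mem _ hiA
        exact haA (Finset.mem_of_mem_erase (hgood _ h1' h2'))

/-- Bondy's theorem: any system of size at most `|S|` is a Bondy system. -/
theorem bondy {α : Type*} [DecidableEq α] (S : Finset α) (𝒜 : Finset (Finset α))
    (hs : 1 ≤ S.card) (hsub : ∀ A ∈ 𝒜, A ⊆ S) (hcard : 𝒜.card ≤ S.card) :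
    ∃ a ∈ S, ∀ A ∈ 𝒜, insert a A ∈ 𝒜 → a ∈ A := by
  exact bondy_aux S.card S 𝒜 rfl hs hsub hcard
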